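/- arXiv:1304.1564 — 2 statements merged into one kernel-verified Lean document; each statement's English description precedes it below -/
import Mathlib

section
/- Let S be the unilateral shift on H = ℓ²(ℕ; ℂ), e₀ the standard basis vector at 0, and let V be an isometry on H commuting with S. Then the operator norm of (I − VV*) S* VV* (the implementation on H of the compression P_{(ran V)^⊥} S*|_{ran V}) equals (1 − |⟨V e₀, e₀⟩|²)^{1/2}. -/
/-!
Write `θ = (V e₀) 0` and `T = (1 - VV*) S* VV*`. Because `V` commutes with `S`, one has
`(V g) 0 = θ · g 0` and `V* S* V = S*`. For `g = V* f`, Pythagoras for the isometries `V` and `S`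
(`‖u - VV* u‖² = ‖u‖² - ‖V* u‖²`, `‖S* u‖² = ‖u‖² - |u 0|²`) then gives
`‖T f‖² = ‖S* V g‖² - ‖S* g‖² = |g 0|² (1 - |θ|²)`. Hence `‖T‖ ≤ (1 - |θ|²)^{1/2}` since
`|g 0| ≤ ‖g‖ ≤ ‖f‖`, with equality at `f = V e₀`, where `g = e₀`.
-/

open ContinuousLinearMap

noncomputable section

/-- `ℓ²(ℕ; ℂ)`, identified with the Hardy space `H²(𝔻)` via Taylor coefficients. -/
abbrev H1 : Type := lp (fun _ : ℕ => ℂ) 2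

/-- `S` is the unilateral shift: `(S f) 0 = 0` and `(S f) k = f (k-1)` for `k ≥ 1`. -/
def IsShift1 (S : H1 →L[ℂ] H1) : Prop :=
  ∀ (f : H1) (k : ℕ), S f k = if k = 0 then 0 else f (k - 1)

/-- The standard basis vector at `0` (the constant function `1` in `H²(𝔻)`). -/
def e0 : H1 := lp.single 2 0 1

theorem Commute.star_mul_star_mul_eq_star {R : Type*} [Monoid R] [StarMul R] {v s : R}
    (hvs : Commute v s) (hv : star v * v = 1) : star v * star s * v = star s := by
  rw [← star_mul, ← hvs.eq, star_mul, mul_assoc, hv, mul_one]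

section Isometry

variable {𝕜 E : Type*} [RCLike 𝕜] [NormedAddCommGroup E] [InnerProductSpace 𝕜 E]
  [CompleteSpace E] {V : E →L[𝕜] E}

theorem norm_map_of_adjoint_mul_self_eq_one (hV : adjoint V * V = 1) (x : E) :
    ‖V x‖ = ‖x‖ :=
  V.norm_map_iff_adjoint_comp_self.mpr hV x

theorem norm_sub_apply_adjoint_apply_sq (hV : adjoint V * V = 1) (u : E) :
    ‖u - V (adjoint V u)‖ ^ 2 = ‖u‖ ^ 2 - ‖adjoint V u‖ ^ 2 := by
  rw [@norm_sub_sq 𝕜, ← adjoint_inner_left, inner_self_eq_norm_sq,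
    norm_map_of_adjoint_mul_self_eq_one hV]
  ring

theorem norm_adjoint_apply_le (hV : adjoint V * V = 1) (u : E) : ‖adjoint V u‖ ≤ ‖u‖ := by
  have h := norm_sub_apply_adjoint_apply_sq hV u
  have : 0 ≤ ‖u - V (adjoint V u)‖ ^ 2 := by positivity
  exact (pow_le_pow_iff_left₀ (norm_nonneg _) (norm_nonneg _) two_ne_zero).mp (by linarith)

end Isometry

theorem lp.apply_eq_inner_single {ι 𝕜 : Type*} [RCLike 𝕜] [DecidableEq ι]
    (f : lp (fun _ : ι => 𝕜) 2) (i : ι) : f i = inner 𝕜 (lp.single 2 i (1 : 𝕜)) f := by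
  simp [lp.inner_single_left, RCLike.inner_apply]

theorem e0_apply_zero : e0 0 = 1 := lp.single_apply_self 2 0 1

theorem e0_apply_succ (k : ℕ) : e0 (k + 1) = 0 := lp.single_apply_ne 2 0 1 (by omega)

theorem norm_e0 : ‖e0‖ = 1 := by
  simp [e0, lp.norm_single]

theorem inner_e0_left (f : H1) : inner ℂ e0 f = f 0 := (lp.apply_eq_inner_single f 0).symm

namespace IsShift1

variable {S : H1 →L[ℂ] H1} (hS : IsShift1 S)
include hS

theorem apply_single (k : ℕ) : S (lp.single 2 k 1) = lp.single 2 (k + 1) 1 := by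
  ext j
  rw [hS]
  rcases eq_or_ne j (k + 1) with rfl | hj
  · simp [lp.single_apply]
  · rw [lp.single_apply_ne _ _ _ hj]
    split_ifs
    · rfl
    · exact lp.single_apply_ne _ _ _ (by omega)

theorem adjoint_apply (f : H1) (k : ℕ) : adjoint S f k = f (k + 1) := by
  rw [lp.apply_eq_inner_single, adjoint_inner_right, hS.apply_single,
    ← lp.apply_eq_inner_single]

theorem adjoint_mul_self : adjoint S * S = 1 := by
  ext f k
  rw [mul_apply_eq_comp, one_apply_eq_self, hS.adjoint_apply, hS]
  simp

theorem apply_adjoint_apply (f : H1) : S (adjoint S f) = f - f 0 • e0 := by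
  ext (_ | k) <;> rw [hS, lp.coeFn_sub, lp.coeFn_smul, Pi.sub_apply, Pi.smul_apply] <;>
    simp [hS.adjoint_apply, e0_apply_zero, e0_apply_succ]

theorem norm_adjoint_apply_sq (f : H1) : ‖adjoint S f‖ ^ 2 = ‖f‖ ^ 2 - ‖f 0‖ ^ 2 := by
  have h := norm_sub_apply_adjoint_apply_sq hS.adjoint_mul_self f
  rw [hS.apply_adjoint_apply, sub_sub_cancel, norm_smul, norm_e0, mul_one] at h
  linarith

theorem apply_zero_of_commute {V : H1 →L[ℂ] H1} (hVS : Commute V S) (f : H1) :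
    V f 0 = V e0 0 * f 0 := by
  have hf : f = f 0 • e0 + S (adjoint S f) := by rw [hS.apply_adjoint_apply]; abel
  have hSV : V (S (adjoint S f)) = S (V (adjoint S f)) := congr($(hVS.eq) (adjoint S f))
  conv_lhs => rw [hf, map_add, map_smul, hSV]
  rw [lp.coeFn_add, lp.coeFn_smul, Pi.add_apply, Pi.smul_apply, hS]
  simp [mul_comm]

theorem norm_compression_apply_sq {V : H1 →L[ℂ] H1} (hV : adjoint V * V = 1)
    (hVS : Commute V S) (g : H1) :
    ‖(1 - V * adjoint V) (adjoint S (V g))‖ ^ 2 = ‖g 0‖ ^ 2 * (1 - ‖V e0 0‖ ^ 2) := by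
  have hV' : adjoint V (adjoint S (V g)) = adjoint S g := by
    simpa [star_eq_adjoint] using congr($(hVS.star_mul_star_mul_eq_star hV) g)
  have h := norm_sub_apply_adjoint_apply_sq hV (adjoint S (V g))
  rw [hV', hS.norm_adjoint_apply_sq, hS.norm_adjoint_apply_sq,
    norm_map_of_adjoint_mul_self_eq_one hV, hS.apply_zero_of_commute hVS, norm_mul] at h
  rw [sub_apply, one_apply_eq_self, mul_apply_eq_comp, hV', h]
  ring

end IsShift1

/-- If `S` is the unilateral shift and `V` is an isometry commuting with
`S` (so `V = M_Θ` for an inner function `Θ` with `Θ(0) = ⟨V e₀, e₀⟩`, i.e. Mathlib's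
`⟪e₀, V e₀⟫`), then the norm of `(I − VV*) S* V V*` — the implementation on `H` of the
compression `P_{(ran V)ᗮ} S*|_{ran V}` — equals `(1 − |Θ(0)|²)^{1/2}`. -/
theorem norm_compression_shift_adjoint
    (S V : H1 →L[ℂ] H1) (hS : IsShift1 S)
    (hV : adjoint V * V = 1) (hVS : V * S = S * V) :
    ‖(1 - V * adjoint V) * adjoint S * (V * adjoint V)‖
      = Real.sqrt (1 - ‖(inner ℂ e0 (V e0) : ℂ)‖ ^ 2) := by
  set c := Real.sqrt (1 - ‖V e0 0‖ ^ 2)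
  have hT (f : H1) : ‖((1 - V * adjoint V) * adjoint S * (V * adjoint V)) f‖
      = ‖adjoint V f 0‖ * c := by
    rw [← Real.sqrt_sq (norm_nonneg _), ← Real.sqrt_sq (norm_nonneg (adjoint V f 0)),
      ← Real.sqrt_mul (sq_nonneg _), ← hS.norm_compression_apply_sq hV hVS]
    rfl
  have hVe0 : adjoint V (V e0) = e0 := congr($hV e0)
  rw [inner_e0_left]
  refine le_antisymm (opNorm_le_bound _ (Real.sqrt_nonneg _) fun f => ?_) ?_
  · rw [hT, mul_comm]
    gcongr
    exact (lp.norm_apply_le_norm two_ne_zero _ 0).trans (norm_adjoint_apply_le hV f)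
  · calc c = ‖((1 - V * adjoint V) * adjoint S * (V * adjoint V)) (V e0)‖ := by
          rw [hT, hVe0, e0_apply_zero, norm_one, one_mul]
      _ ≤ _ := unit_le_opNorm _ _ (by rw [norm_map_of_adjoint_mul_self_eq_one hV, norm_e0])
end
end

section
/- Let H be a complex Hilbert space, let A be an isometry on H, and let P₂, …, P_m be pairwise commuting orthogonal projections on H, each of which commutes with A. Writing Qⱼ := I − Pⱼ, the operator T := A Q₂ Q₃ ⋯ Q_m + P₂ Q₃ ⋯ Q_m + P₃ Q₄ ⋯ Q_m + ⋯ + P_{m−1} Q_m + P_m is an isometry on H (i.e. T*T = I). -/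
open ContinuousLinearMap

private lemma blh_aux
    {H : Type*} [NormedAddCommGroup H] [InnerProductSpace ℂ H] [CompleteSpace H] :
    ∀ (m : ℕ) (A : H →L[ℂ] H), adjoint A * A = 1 →
    ∀ (P : Fin m → H →L[ℂ] H), (∀ i, IsSelfAdjoint (P i)) →
    (∀ i, P i * P i = P i) → (∀ i j, P i * P j = P j * P i) →
    (∀ i, A * P i = P i * A) →
    adjoint (A * (List.ofFn fun j => 1 - P j).prod
        + ∑ j : Fin m, P j * ((List.ofFn fun k => 1 - P k).drop (j.val + 1)).prod)
      * (A * (List.ofFn fun j => 1 - P j).prod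
        + ∑ j : Fin m, P j * ((List.ofFn fun k => 1 - P k).drop (j.val + 1)).prod)
      = 1 := by
  intro m
  induction m with
  | zero =>
      intro A hA P _ _ _ _
      simpa using hA
  | succ n IH =>
      intro A hA P hsa hidem hcomm hAP
      -- commutation of adjoint A with projections
      have hA'P : ∀ i, adjoint A * P i = P i * adjoint A := by
        intro i
        have h := congrArg star (hAP i)
        rw [star_mul, star_mul, (hsa i).star_eq] at h
        rw [← star_eq_adjoint]
        exact h.symm
      set B : H →L[ℂ] H := A * (1 - P 0) + P 0 with hB
      have hz : (1 - P 0) * P 0 = 0 := by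
        rw [sub_mul, one_mul, hidem 0, sub_self]
      have hz' : P 0 * (1 - P 0) = 0 := by
        rw [mul_sub, mul_one, hidem 0, sub_self]
      -- B is an isometry
      have hBiso : adjoint B * B = 1 := by
        have hadj : adjoint B = (1 - P 0) * adjoint A + P 0 := by
          rw [hB, ← star_eq_adjoint, ← star_eq_adjoint, star_add, star_mul, star_sub,
            star_one, (hsa 0).star_eq]
        rw [hadj, hB]
        have e1 : ((1 - P 0) * adjoint A + P 0) * (A * (1 - P 0) + P 0)
            = (1 - P 0) * (adjoint A * A) * (1 - P 0)
              + (1 - P 0) * (adjoint A * P 0) + (P 0 * A) * (1 - P 0)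
              + P 0 * P 0 := by noncomm_ring
        rw [e1, hA, hA'P 0, ← hAP 0, mul_one, ← mul_assoc, hz, zero_mul,
          mul_assoc, hz', mul_zero, hidem 0]
        have hq : (1 - P 0) * (1 - P 0) = 1 - P 0 := by
          rw [mul_sub, mul_one, hz, sub_zero]
        rw [hq]
        abel
      -- B commutes with the remaining projections
      have hBP : ∀ i : Fin n, B * P i.succ = P i.succ * B := by
        intro i
        have h3 : (1 - P 0) * P i.succ = P i.succ * (1 - P 0) := by
          rw [sub_mul, mul_sub, one_mul, mul_one, hcomm 0 i.succ]
        calc B * P i.succ = A * ((1 - P 0) * P i.succ) + P 0 * P i.succ := by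
              rw [hB]; noncomm_ring
          _ = A * (P i.succ * (1 - P 0)) + P i.succ * P 0 := by
              rw [h3, hcomm 0 i.succ]
          _ = (A * P i.succ) * (1 - P 0) + P i.succ * P 0 := by rw [mul_assoc]
          _ = P i.succ * B := by rw [hAP i.succ, hB]; noncomm_ring
      have key := IH B hBiso (fun i => P i.succ) (fun i => hsa i.succ)
        (fun i => hidem i.succ) (fun i j => hcomm i.succ j.succ)
        (fun i => hBP i)
      -- rewrite the goal into the form of `key`
      have hL : (List.ofFn fun j : Fin (n+1) => 1 - P j)
          = (1 - P 0) :: List.ofFn (fun j : Fin n => 1 - P j.succ) := by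
        rw [List.ofFn_succ]
      have hT : (A * (List.ofFn fun j : Fin (n+1) => 1 - P j).prod
            + ∑ j : Fin (n+1), P j * ((List.ofFn fun k : Fin (n+1) => 1 - P k).drop (j.val + 1)).prod)
          = B * (List.ofFn fun j : Fin n => 1 - P j.succ).prod
            + ∑ j : Fin n, P j.succ * ((List.ofFn fun k : Fin n => 1 - P k.succ).drop (j.val + 1)).prod := by
        rw [hL, Fin.sum_univ_succ]
        simp only [List.prod_cons, Fin.val_zero, Fin.val_succ, List.drop_succ_cons,
          List.drop_zero]
        rw [hB]
        noncomm_ring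
      rw [hT]
      exact key

/-- Let `A` be an isometry on a complex Hilbert space `H` and let
`P 1, …, P m` be pairwise commuting orthogonal projections, each commuting with `A`.
Writing `Q j = I − P j`, the operator
`T = A Q₁⋯Q_m + P₁ Q₂⋯Q_m + ⋯ + P_{m-1} Q_m + P_m`
(index shifted: here `P 0, …, P (m-1)` play the roles of `P₂, …, P_{m+1}` of the paper)
is an isometry, i.e. `T* T = I`. -/
theorem isometry_of_blh_inner_function
    {H : Type*} [NormedAddCommGroup H] [InnerProductSpace ℂ H] [CompleteSpace H]
    {m : ℕ} (A : H →L[ℂ] H) (hA : adjoint A * A = 1)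
    (P : Fin m → H →L[ℂ] H)
    (hsa : ∀ i, IsSelfAdjoint (P i))
    (hidem : ∀ i, P i * P i = P i)
    (hcomm : ∀ i j, P i * P j = P j * P i)
    (hAP : ∀ i, A * P i = P i * A) :
    adjoint (A * (List.ofFn fun j => 1 - P j).prod
        + ∑ j : Fin m, P j * ((List.ofFn fun k => 1 - P k).drop (j.val + 1)).prod)
      * (A * (List.ofFn fun j => 1 - P j).prod
        + ∑ j : Fin m, P j * ((List.ofFn fun k => 1 - P k).drop (j.val + 1)).prod)
      = 1 :=
  blh_aux m A hA P hsa hidem hcomm hAP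
end
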